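/- arXiv:1802.06316 — 3 statements merged into one kernel-verified Lean document; each statement's English description precedes it below -/
import Mathlib

section
/- Let n ≥ 2, let w₂,…,w_n ≥ 2 be integers, and let I = (x₁x₂^{w₂}, x₁x₃^{w₃}, …, x₁x_n^{w_n}) in S = k[x₁,…,x_n]. Then pd(I) = n − 2. -/
/-!
`I = x₁ · J` where `J` is generated by the pure powers `x_i ^ w_i`, `i ≠ 1`, which form a regular
sequence of length `n - 1`. Hence the Koszul complex on these powers, with its augmentation
multiplied by the non-zero-divisor `x₁`, is a minimal free resolution of `S ⧸ I`, of rank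
`(n - 1).choose i` in degree `i`. Any two minimal resolutions have the same ranks: the comparison
maps between them compose to chain maps lifting the identity, which are homotopic to the identity
and therefore equal to it modulo the maximal ideal. So the `i`-th module of the resolution of `I`
has rank `(n - 1).choose (i + 1)`, which is nonzero exactly for `i ≤ n - 2`.
-/

open MvPolynomial

/-- A finite minimal graded free resolution of an ideal `I` in a polynomial ring
`k[x_i : i ∈ σ]`, recorded via the ranks of the free modules, the degrees of the
(degree-shifted) basis elements, the matrices of the differentials and the
augmentation map onto `I`.  Exactness is expressed via `Matrix.mulVecLin`, and
minimality via the vanishing of the constant coefficients of all matrix entries. -/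
structure MinFreeRes (σ k : Type) [Field k] (I : Ideal (MvPolynomial σ k)) where
  rank : ℕ → ℕ
  deg : (i : ℕ) → Fin (rank i) → ℕ
  aug : Fin (rank 0) → MvPolynomial σ k
  mat : (i : ℕ) → Matrix (Fin (rank i)) (Fin (rank (i + 1))) (MvPolynomial σ k)
  finite : ∃ N, ∀ i, N ≤ i → rank i = 0
  aug_homog : ∀ s, (aug s).IsHomogeneous (deg 0 s)
  span_aug : Ideal.span (Set.range aug) = I
  mat_homog : ∀ i s t, ∃ d, ((mat i) s t).IsHomogeneous d ∧ deg (i + 1) t = deg i s + d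
  minimal : ∀ i s t, constantCoeff ((mat i) s t) = 0
  exact_succ : ∀ i,
    LinearMap.range (Matrix.mulVecLin (mat (i + 1))) = LinearMap.ker (Matrix.mulVecLin (mat i))
  exact_zero :
    LinearMap.range (Matrix.mulVecLin (mat 0)) =
      LinearMap.ker (Matrix.mulVecLin (Matrix.of fun (_ : Unit) s => aug s))

variable {σ k : Type} [Field k] {I : Ideal (MvPolynomial σ k)}

/-- The graded Betti number `β_{i,j}(I)`: the number of basis elements of the `i`-th
free module in the minimal free resolution sitting in degree `j`. -/
def MinFreeRes.betti (R : MinFreeRes σ k I) (i j : ℕ) : ℕ :=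
  (Finset.univ.filter fun t => R.deg i t = j).card

/-- The projective dimension `pd(I) = max{i : β_{i,j}(I) ≠ 0 for some j}`. -/
noncomputable def MinFreeRes.pd (R : MinFreeRes σ k I) : ℕ :=
  sSup {i | R.rank i ≠ 0}

/-- The Castelnuovo–Mumford regularity `reg(I) = max{j - i : β_{i,j}(I) ≠ 0}`. -/
noncomputable def MinFreeRes.reg (R : MinFreeRes σ k I) : ℕ :=
  sSup {d | ∃ i t, R.deg i t = i + d}

/-- The depth of a module `M` over the polynomial ring: the maximal length of a
regular sequence on `M` consisting of elements of the maximal graded ideal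
`(x_i : i ∈ σ)` (i.e. with vanishing constant coefficient). -/
noncomputable def mdepth (σ k : Type) [Field k] (M : Type) [AddCommGroup M]
    [Module (MvPolynomial σ k) M] : ℕ :=
  sSup {r | ∃ rs : List (MvPolynomial σ k), rs.length = r ∧
    (∀ x ∈ rs, constantCoeff x = 0) ∧ RingTheory.Sequence.IsRegular M rs}

namespace Matrix

variable {A : Type*} [CommRing A] {l m n p q s t : Type*}

theorem exists_mul_eq_of_forall_exists_mulVec_eq [Fintype m] {M : Matrix l m A}
    {N : Matrix l n A} (h : ∀ j, ∃ u, M *ᵥ u = fun i => N i j) :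
    ∃ C : Matrix m n A, M * C = N := by
  choose u hu using h
  refine ⟨of fun s j => u j s, ?_⟩
  ext i j
  simpa [mul_apply, mulVec, dotProduct] using congrFun (hu j) i

theorem mem_span_range_iff_exists_mulVec_eq [Fintype m] (M : Matrix Unit m A) (g : A) :
    g ∈ Ideal.span (Set.range (M ())) ↔ ∃ u, M *ᵥ u = fun _ => g := by
  simp only [Ideal.span, Submodule.mem_span_range_iff_exists_fun, funext_iff, mulVec, dotProduct,
    smul_eq_mul, Unique.forall_iff]
  simp_rw [mul_comm (M _ _)]

theorem exists_mul_eq_of_span_le [Fintype m] {M : Matrix Unit m A} {N : Matrix Unit n A}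
    (h : Ideal.span (Set.range (N ())) ≤ Ideal.span (Set.range (M ()))) :
    ∃ C : Matrix m n A, M * C = N :=
  exists_mul_eq_of_forall_exists_mulVec_eq fun j =>
    (M.mem_span_range_iff_exists_mulVec_eq _).1 (h (Ideal.subset_span ⟨j, rfl⟩))

theorem range_mulVecLin_eq_ker_iff [Fintype m] [Fintype n] [DecidableEq n] {M : Matrix l m A}
    {N : Matrix m n A} :
    LinearMap.range N.mulVecLin = LinearMap.ker M.mulVecLin ↔
      M * N = 0 ∧ ∀ v, M *ᵥ v = 0 → ∃ u, N *ᵥ u = v := by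
  rw [le_antisymm_iff, LinearMap.range_le_ker_iff, ← mulVecLin_mul]
  refine and_congr ⟨fun h => ?_, fun h => by rw [h, mulVecLin_zero]⟩ ?_
  · exact toLin'.injective (h.trans (map_zero _).symm)
  · simp [SetLike.le_def]

theorem card_le_of_mul_eq_one {K : Type*} [Field K] [Fintype m] [Fintype n] [DecidableEq m]
    {M : Matrix m n K} {N : Matrix n m K} (h : M * N = 1) : Fintype.card m ≤ Fintype.card n := by
  rw [← rank_one (R := K), ← h]
  exact (rank_mul_le_left M N).trans (rank_le_card_width M)

theorem fromBlocks_mul_fromBlocks_eq_zero [Fintype q] [Fintype s] [DecidableEq q] [DecidableEq s]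
    {K₀ : Matrix p q A} {K₁ : Matrix q s A} {K₂ : Matrix s t A} (h₀₁ : K₀ * K₁ = 0)
    (h₁₂ : K₁ * K₂ = 0) {c c' : A} (hc : c' = -c) :
    fromBlocks K₁ (c • 1) 0 K₀ * fromBlocks K₂ (c' • 1) 0 K₁ = 0 := by
  rw [fromBlocks_multiply]
  simp [hc, h₀₁, h₁₂]

theorem fromCols_mul_fromBlocks_eq_zero [Fintype q] [DecidableEq q] {K₀ : Matrix Unit q A}
    {K₁ : Matrix q s A} (h₀₁ : K₀ * K₁ = 0) {c c' : A} (hc : c' = -c) :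
    fromCols K₀ (c • (1 : Matrix Unit Unit A)) * fromBlocks K₁ (c' • 1) 0 K₀ = 0 := by
  rw [fromCols_mul_fromBlocks]
  simp [hc, h₀₁]

theorem range_fromCols_smul_one (K₀ : Matrix Unit q A) (c : A) :
    Set.range (fromCols K₀ (c • (1 : Matrix Unit Unit A)) ()) =
      insert c (Set.range (K₀ ())) := by
  ext a
  simp [fromCols, Sum.exists, or_comm, eq_comm]

/-- Exactness of the mapping cone of multiplication by `c` on an exact complex. -/
theorem exists_fromBlocks_mulVec_eq [Fintype q] [Fintype s] [Fintype t] [DecidableEq q]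
    [DecidableEq s] {K₀ : Matrix p q A} {K₁ : Matrix q s A} {K₂ : Matrix s t A}
    (h₀ : ∀ v, K₀ *ᵥ v = 0 → ∃ u, K₁ *ᵥ u = v)
    (h₁ : ∀ v, K₁ *ᵥ v = 0 → ∃ u, K₂ *ᵥ u = v) {c c' : A} (hc : c' = -c) (v : s ⊕ q → A)
    (hv : fromBlocks K₁ (c • 1) 0 K₀ *ᵥ v = 0) :
    ∃ u, fromBlocks K₂ (c' • 1) 0 K₁ *ᵥ u = v := by
  have hv₁ : K₁ *ᵥ (v ∘ Sum.inl) + c • (v ∘ Sum.inr) = 0 := funext fun j => by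
    simpa [fromBlocks_mulVec, smul_mulVec, one_mulVec] using congrFun hv (Sum.inl j)
  have hv₂ : K₀ *ᵥ (v ∘ Sum.inr) = 0 := funext fun j => by
    simpa [fromBlocks_mulVec, smul_mulVec, one_mulVec] using congrFun hv (Sum.inr j)
  obtain ⟨e, he⟩ := h₀ _ hv₂
  obtain ⟨g, hg⟩ := h₁ (v ∘ Sum.inl + c • e) (by rw [mulVec_add, mulVec_smul, he, hv₁])
  refine ⟨Sum.elim g e, ?_⟩
  rw [fromBlocks_mulVec, Sum.elim_comp_inl, Sum.elim_comp_inr, hg, he, hc, smul_mulVec,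
    one_mulVec, zero_mulVec, zero_add, neg_smul, add_neg_cancel_right, Sum.elim_comp_inl_inr]

/-- The same at the bottom of the complex, where exactness of the cone comes from `c` being
a non-zero-divisor modulo the ideal generated by the row `K₀`. -/
theorem exists_fromBlocks_mulVec_eq_of_fromCols [Fintype q] [Fintype s] [DecidableEq q]
    {K₀ : Matrix Unit q A} {K₁ : Matrix q s A} (h₀ : ∀ v, K₀ *ᵥ v = 0 → ∃ u, K₁ *ᵥ u = v)
    {c c' : A}
    (hreg : ∀ f, c * f ∈ Ideal.span (Set.range (K₀ ())) → f ∈ Ideal.span (Set.range (K₀ ())))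
    (hc : c' = -c) (v : q ⊕ Unit → A)
    (hv : fromCols K₀ (c • (1 : Matrix Unit Unit A)) *ᵥ v = 0) :
    ∃ u, fromBlocks K₁ (c' • 1) 0 K₀ *ᵥ u = v := by
  have hv' : K₀ *ᵥ (v ∘ Sum.inl) + c • (v ∘ Sum.inr) = 0 := by
    simpa [fromCols_mulVec, smul_mulVec, one_mulVec] using hv
  have hmem : c * v (Sum.inr ()) ∈ Ideal.span (Set.range (K₀ ())) := by
    have h : (K₀ *ᵥ (v ∘ Sum.inl)) () + c * v (Sum.inr ()) = 0 := congrFun hv' ()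
    rw [eq_neg_of_add_eq_zero_right h]
    exact neg_mem ((mem_span_range_iff_exists_mulVec_eq K₀ _).2 ⟨_, rfl⟩)
  obtain ⟨e, he⟩ := (mem_span_range_iff_exists_mulVec_eq K₀ _).1 (hreg _ hmem)
  replace he : K₀ *ᵥ e = v ∘ Sum.inr := he.trans (funext fun _ => rfl)
  obtain ⟨g, hg⟩ := h₀ (v ∘ Sum.inl + c • e) (by rw [mulVec_add, mulVec_smul, he, hv'])
  refine ⟨Sum.elim g e, ?_⟩
  rw [fromBlocks_mulVec, Sum.elim_comp_inl, Sum.elim_comp_inr, hg, he, hc, smul_mulVec,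
    one_mulVec, zero_mulVec, zero_add, neg_smul, add_neg_cancel_right, Sum.elim_comp_inl_inr]

end Matrix

theorem Nat.exists_seq_of_forall_exists {T : ℕ → Type*} (r : ∀ i, T i → T (i + 1) → Prop)
    {a : T 0} {b : T 1} (hab : r 0 a b) (step : ∀ i a b, r i a b → ∃ c, r (i + 1) b c) :
    ∃ t : ∀ i, T i, t 0 = a ∧ ∀ i, r i (t i) (t (i + 1)) := by
  choose next hnext using step
  let F : ∀ i, Σ' (x : T i) (y : T (i + 1)), r i x y := fun i =>
    Nat.rec ⟨a, b, hab⟩ (fun i p => ⟨p.2.1, next i p.1 p.2.1 p.2.2, hnext _ _ _ _⟩) i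
  exact ⟨fun i => (F i).1, rfl, fun i => (F i).2.2⟩

theorem Nat.sSup_Iio (m : ℕ) : sSup (Set.Iio m) = m - 1 := by
  cases m with
  | zero => simp
  | succ m => exact IsGreatest.csSup_eq ⟨Nat.lt_succ_self m, fun i hi => Nat.lt_succ_iff.1 hi⟩

/-- A complex `⋯ → A^{ι 2} → A^{ι 1} → A^{ι 0}` of finite free modules, the differential
`d i : A^{ι (i + 1)} → A^{ι i}` acting by `mulVec`, exact at every `A^{ι (i + 1)}`: a free
resolution of the cokernel of `d 0`. -/
structure MatrixResolution (A : Type*) [CommRing A] where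
  ι : ℕ → Type
  [fintype : ∀ i, Fintype (ι i)]
  [decidableEq : ∀ i, DecidableEq (ι i)]
  d : ∀ i, Matrix (ι i) (ι (i + 1)) A
  exact : ∀ i, LinearMap.range (d (i + 1)).mulVecLin = LinearMap.ker (d i).mulVecLin

attribute [instance] MatrixResolution.fintype MatrixResolution.decidableEq

namespace MatrixResolution

variable {A : Type*} [CommRing A] (P : MatrixResolution A) {Q S : MatrixResolution A}

theorem d_mul_d (i : ℕ) : P.d i * P.d (i + 1) = 0 :=
  (Matrix.range_mulVecLin_eq_ker_iff.1 (P.exact i)).1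

theorem exists_d_mul_eq (i : ℕ) {c : Type*} {N : Matrix (P.ι (i + 1)) c A}
    (hN : P.d i * N = 0) : ∃ C : Matrix (P.ι (i + 2)) c A, P.d (i + 1) * C = N := by
  refine Matrix.exists_mul_eq_of_forall_exists_mulVec_eq fun j =>
    (Matrix.range_mulVecLin_eq_ker_iff.1 (P.exact i)).2 _ ?_
  ext s
  simpa [Matrix.mul_apply, Matrix.mulVec, dotProduct] using congrFun (congrFun hN s) j

def smulHead (c : A) (hc : c ∈ nonZeroDivisors A) : MatrixResolution A where
  ι := P.ι
  d
    | 0 => c • P.d 0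
    | i + 1 => P.d (i + 1)
  exact
    | 0 => by
      rw [P.exact 0]
      ext v
      simp only [LinearMap.mem_ker, Matrix.mulVecLin_apply, Matrix.smul_mulVec, funext_iff,
        Pi.smul_apply, Pi.zero_apply, smul_eq_mul, mul_left_mem_nonZeroDivisors_eq_zero_iff hc]
    | i + 1 => P.exact (i + 1)

variable {P}

theorem map_smulHead_d {K : Type*} [Field K] (f : A →+* K) {c : A} (hc : c ∈ nonZeroDivisors A)
    (hP : ∀ i, (P.d i).map f = 0) : ∀ i, ((P.smulHead c hc).d i).map f = 0
  | 0 => (Matrix.map_smulₛₗ f f c (map_mul f c) (P.d 0)).trans (by rw [hP]; exact smul_zero _)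
  | i + 1 => hP (i + 1)

def IsChainMap (α : ∀ i, Matrix (P.ι i) (Q.ι i) A) : Prop :=
  ∀ i, P.d i * α (i + 1) = α i * Q.d i

theorem IsChainMap.mul {α : ∀ i, Matrix (P.ι i) (Q.ι i) A}
    {β : ∀ i, Matrix (Q.ι i) (S.ι i) A} (hα : IsChainMap α) (hβ : IsChainMap β) :
    IsChainMap fun i => α i * β i := fun i => by
  rw [← Matrix.mul_assoc, hα i, Matrix.mul_assoc, hβ i, Matrix.mul_assoc]

theorem exists_isChainMap {α₀ : Matrix (P.ι 0) (Q.ι 0) A}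
    (h : ∃ α₁ : Matrix (P.ι 1) (Q.ι 1) A, P.d 0 * α₁ = α₀ * Q.d 0) :
    ∃ α : ∀ i, Matrix (P.ι i) (Q.ι i) A, α 0 = α₀ ∧ IsChainMap α := by
  obtain ⟨α₁, hα₁⟩ := h
  refine Nat.exists_seq_of_forall_exists (fun i a b => P.d i * b = a * Q.d i) hα₁
    fun i a b hab => P.exists_d_mul_eq i ?_
  rw [← Matrix.mul_assoc, hab, Matrix.mul_assoc, Q.d_mul_d, Matrix.mul_zero]

/-- A chain endomorphism lifting the identity is homotopic to the identity; over a minimal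
resolution the homotopy vanishes modulo the maximal ideal. -/
theorem IsChainMap.map_eq_one {K : Type*} [Field K] (f : A →+* K) (hP : ∀ i, (P.d i).map f = 0)
    {φ : ∀ i, Matrix (P.ι i) (P.ι i) A} (hφ : IsChainMap φ) (h₀ : φ 0 = 1) (i : ℕ) :
    (φ i).map f = 1 := by
  have homotopy : ∀ i, ∃ h : Matrix (P.ι (i + 1)) (P.ι i) A,
      P.d i * (φ (i + 1) - 1 - h * P.d i) = 0 := by
    intro i
    induction i with
    | zero => exact ⟨0, by rw [Matrix.mul_sub, Matrix.mul_sub, hφ 0, h₀]; simp⟩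
    | succ i ih =>
      obtain ⟨h, hh⟩ := ih
      obtain ⟨h', hh'⟩ := P.exists_d_mul_eq i hh
      refine ⟨h', ?_⟩
      calc P.d (i + 1) * (φ (i + 2) - 1 - h' * P.d (i + 1))
          = (φ (i + 1) - 1 - P.d (i + 1) * h') * P.d (i + 1) := by
            rw [Matrix.mul_sub, Matrix.mul_sub, hφ, Matrix.sub_mul, Matrix.sub_mul,
              Matrix.mul_one, Matrix.one_mul, Matrix.mul_assoc]
        _ = h * P.d i * P.d (i + 1) := by rw [hh', sub_sub_cancel]
        _ = 0 := by rw [Matrix.mul_assoc, P.d_mul_d, Matrix.mul_zero]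
  cases i with
  | zero => rw [h₀, Matrix.map_one _ f.map_zero f.map_one]
  | succ i =>
    obtain ⟨h, hh⟩ := homotopy i
    obtain ⟨h', hh'⟩ := P.exists_d_mul_eq i hh
    rw [eq_sub_iff_add_eq, eq_sub_iff_add_eq] at hh'
    rw [← hh', Matrix.map_add _ (map_add f), Matrix.map_add _ (map_add f), Matrix.map_mul,
      Matrix.map_mul, hP, hP, Matrix.zero_mul, Matrix.mul_zero, zero_add, zero_add,
      Matrix.map_one _ f.map_zero f.map_one]

theorem natCard_ι_eq_of_minimal {K : Type*} [Field K] (f : A →+* K)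
    (hP : ∀ i, (P.d i).map f = 0) (hQ : ∀ i, (Q.d i).map f = 0)
    {α₀ : Matrix (P.ι 0) (Q.ι 0) A} {β₀ : Matrix (Q.ι 0) (P.ι 0) A}
    (hαβ : α₀ * β₀ = 1) (hβα : β₀ * α₀ = 1)
    (hα : ∃ α₁ : Matrix (P.ι 1) (Q.ι 1) A, P.d 0 * α₁ = α₀ * Q.d 0)
    (hβ : ∃ β₁ : Matrix (Q.ι 1) (P.ι 1) A, Q.d 0 * β₁ = β₀ * P.d 0) (i : ℕ) :
    Nat.card (P.ι i) = Nat.card (Q.ι i) := by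
  obtain ⟨α, rfl, α_chain⟩ := exists_isChainMap hα
  obtain ⟨β, rfl, β_chain⟩ := exists_isChainMap hβ
  have hαβ_i := (α_chain.mul β_chain).map_eq_one f hP hαβ i
  have hβα_i := (β_chain.mul α_chain).map_eq_one f hQ hβα i
  rw [Matrix.map_mul] at hαβ_i hβα_i
  rw [Nat.card_eq_fintype_card, Nat.card_eq_fintype_card]
  exact (Matrix.card_le_of_mul_eq_one hαβ_i).antisymm (Matrix.card_le_of_mul_eq_one hβα_i)

end MatrixResolution

/-- `KoszulBasis.succ r i` indexes a basis of `Λ^{i+1} A^r`, following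
`Λ^{i+1} A^{r+1} = Λ^{i+1} A^r ⊕ Λ^i A^r`; it is split off from `KoszulBasis` so that
`KoszulBasis r 0` is `Unit` by definition. -/
def KoszulBasis.succ : ℕ → ℕ → Type
  | 0, _ => Empty
  | r + 1, i => KoszulBasis.succ r i ⊕ Nat.casesOn i Unit (KoszulBasis.succ r)

def KoszulBasis (r i : ℕ) : Type := Nat.casesOn i Unit (KoszulBasis.succ r)

instance KoszulBasis.succ.instFintype : ∀ r i, Fintype (KoszulBasis.succ r i)
  | 0, _ => inferInstanceAs (Fintype Empty)
  | r + 1, 0 =>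
    letI := instFintype r 0
    inferInstanceAs (Fintype (KoszulBasis.succ r 0 ⊕ Unit))
  | r + 1, i + 1 =>
    letI := instFintype r (i + 1); letI := instFintype r i
    inferInstanceAs (Fintype (KoszulBasis.succ r (i + 1) ⊕ KoszulBasis.succ r i))

instance KoszulBasis.instFintype : ∀ r i, Fintype (KoszulBasis r i)
  | _, 0 => inferInstanceAs (Fintype Unit)
  | _, _ + 1 => inferInstanceAs (Fintype (KoszulBasis.succ _ _))

instance KoszulBasis.succ.instDecidableEq : ∀ r i, DecidableEq (KoszulBasis.succ r i)
  | 0, _ => inferInstanceAs (DecidableEq Empty)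
  | r + 1, 0 =>
    letI := instDecidableEq r 0
    inferInstanceAs (DecidableEq (KoszulBasis.succ r 0 ⊕ Unit))
  | r + 1, i + 1 =>
    letI := instDecidableEq r (i + 1); letI := instDecidableEq r i
    inferInstanceAs (DecidableEq (KoszulBasis.succ r (i + 1) ⊕ KoszulBasis.succ r i))

instance KoszulBasis.instDecidableEq : ∀ r i, DecidableEq (KoszulBasis r i)
  | _, 0 => inferInstanceAs (DecidableEq Unit)
  | _, _ + 1 => inferInstanceAs (DecidableEq (KoszulBasis.succ _ _))

theorem KoszulBasis.natCard : ∀ r i, Nat.card (KoszulBasis r i) = r.choose i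
  | _, 0 => (Nat.card_unique (α := Unit)).trans (Nat.choose_zero_right _).symm
  | 0, _ + 1 => Nat.card_of_isEmpty (α := Empty)
  | r + 1, i + 1 => by
    rw [Nat.choose_succ_succ', ← natCard r (i + 1), ← natCard r i]
    exact (Nat.card_sum (α := KoszulBasis r (i + 1)) (β := KoszulBasis r i)).trans (add_comm _ _)

section WeaklyRegular

variable {A : Type*} [CommSemiring A] {r : ℕ}

/-- The ideal-membership form of `RingTheory.Sequence.IsWeaklyRegular A (List.ofFn y)`. -/
def IsWeaklyRegularTuple (y : Fin r → A) : Prop :=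
  ∀ j f, y j * f ∈ Ideal.span (y '' Set.Iio j) → f ∈ Ideal.span (y '' Set.Iio j)

theorem IsWeaklyRegularTuple.init {y : Fin (r + 1) → A} (hy : IsWeaklyRegularTuple y) :
    IsWeaklyRegularTuple (Fin.init y) := fun j f => by
  have himage : Fin.init y '' Set.Iio j = y '' Set.Iio j.castSucc := by
    rw [← Fin.image_castSucc_Iio, Set.image_image]
    rfl
  rw [himage]
  exact hy _ f

theorem IsWeaklyRegularTuple.mem_span_of_last_mul_mem {y : Fin (r + 1) → A}
    (hy : IsWeaklyRegularTuple y) (f : A)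
    (h : y (Fin.last r) * f ∈ Ideal.span (Set.range (Fin.init y))) :
    f ∈ Ideal.span (Set.range (Fin.init y)) := by
  have hlast : y '' Set.Iio (Fin.last r) = Set.range (Fin.init y) := by
    rw [Fin.init_def, Set.range_comp', Fin.range_castSucc]
    rfl
  rw [← hlast] at h ⊢
  exact hy _ f h

end WeaklyRegular

theorem MvPolynomial.mem_span_X_pow_of_X_pow_mul_mem {R : Type*} [CommSemiring R] {s : Set σ}
    (e : σ → ℕ) {i : σ} (hi : i ∉ s) {f : MvPolynomial σ R}
    (h : X i ^ e i * f ∈ Ideal.span ((fun j => X j ^ e j) '' s)) :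
    f ∈ Ideal.span ((fun j => X j ^ e j) '' s) := by
  have himage : (fun j => (X j ^ e j : MvPolynomial σ R)) '' s =
      (fun d => monomial d 1) '' ((fun j => Finsupp.single j (e j)) '' s) := by
    simp_rw [Set.image_image, X_pow_eq_monomial]
  rw [himage, mem_ideal_span_monomial_image] at h ⊢
  intro m hm
  obtain ⟨_, ⟨j, hj, rfl⟩, hle⟩ := h (Finsupp.single i (e i) + m) (by
    rw [mem_support_iff, X_pow_eq_monomial, coeff_monomial_mul, one_mul]
    exact mem_support_iff.mp hm)
  refine ⟨_, ⟨j, hj, rfl⟩, ?_⟩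
  have hij : i ≠ j := fun h => hi (h ▸ hj)
  simpa [Finsupp.single_le_iff, Finsupp.single_apply, hij] using hle

theorem MvPolynomial.isWeaklyRegularTuple_X_pow {R : Type*} [CommSemiring R] {r : ℕ}
    {v : Fin r → σ} (hv : Function.Injective v) (e : σ → ℕ) :
    IsWeaklyRegularTuple fun j => (X (v j) ^ e (v j) : MvPolynomial σ R) := fun j f h => by
  rw [← Set.image_image (fun s => (X s ^ e s : MvPolynomial σ R))] at h ⊢
  refine mem_span_X_pow_of_X_pow_mul_mem e ?_ h
  rintro ⟨l, hl, hlj⟩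
  exact lt_irrefl j (hv hlj ▸ hl)

section Koszul

open Matrix

variable {A : Type*} [CommRing A]

/-- The Koszul complex of `y`, as the mapping cone of `± y (last r)` on the Koszul complex
of `Fin.init y`. -/
def koszul : ∀ {r : ℕ}, (Fin r → A) →
    ∀ i, Matrix (KoszulBasis r i) (KoszulBasis r (i + 1)) A
  | 0, _, _ => 0
  | r + 1, y, 0 =>
    (fromCols (koszul (Fin.init y) 0) (y (Fin.last r) • 1) :
      Matrix (KoszulBasis r 0) (KoszulBasis r 1 ⊕ KoszulBasis r 0) A)
  | r + 1, y, i + 1 =>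
    (fromBlocks (koszul (Fin.init y) (i + 1)) (((-1) ^ (i + 1) * y (Fin.last r)) • 1) 0
      (koszul (Fin.init y) i) :
      Matrix (KoszulBasis r (i + 1) ⊕ KoszulBasis r i)
        (KoszulBasis r (i + 2) ⊕ KoszulBasis r (i + 1)) A)

theorem koszul_mul_koszul {r : ℕ} (y : Fin r → A) (i : ℕ) :
    koszul y i * koszul y (i + 1) = 0 := by
  induction r generalizing i with
  | zero => exact Matrix.zero_mul _
  | succ r ih =>
    cases i with
    | zero => exact fromCols_mul_fromBlocks_eq_zero (ih _ 0) (by ring)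
    | succ i => exact fromBlocks_mul_fromBlocks_eq_zero (ih _ i) (ih _ (i + 1)) (by ring)

theorem span_range_koszul_zero {r : ℕ} (y : Fin r → A) :
    Ideal.span (Set.range (koszul y 0 ())) = Ideal.span (Set.range y) := by
  induction r with
  | zero => simp [Set.range_eq_empty_iff.2 ⟨fun a : KoszulBasis 0 1 => a.elim⟩]
  | succ r ih =>
    calc Ideal.span (Set.range (koszul y 0 ()))
        = Ideal.span (insert (y (Fin.last r)) (Set.range (koszul (Fin.init y) 0 ()))) :=
          congrArg Ideal.span (range_fromCols_smul_one _ _)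
      _ = Ideal.span (Set.range y) := by
        rw [Ideal.span_insert, ih, ← Ideal.span_insert, ← Fin.range_snoc, Fin.snoc_init_self]

theorem exists_koszul_mulVec_eq {r : ℕ} {y : Fin r → A} (hy : IsWeaklyRegularTuple y) (i : ℕ)
    (v : KoszulBasis r (i + 1) → A) (hv : koszul y i *ᵥ v = 0) :
    ∃ u, koszul y (i + 1) *ᵥ u = v := by
  induction r generalizing i with
  | zero => exact ⟨0, funext fun a => Empty.elim a⟩
  | succ r ih =>
    have ih' := ih hy.init
    cases i with
    | zero =>
      refine exists_fromBlocks_mulVec_eq_of_fromCols (ih' 0) (fun f => ?_) (by ring) v hv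
      rw [span_range_koszul_zero]
      exact hy.mem_span_of_last_mul_mem f
    | succ i => exact exists_fromBlocks_mulVec_eq (ih' i) (ih' (i + 1)) (by ring) v hv

theorem koszul_map_eq_zero {B : Type*} [CommRing B] (f : A →+* B) {r : ℕ} (y : Fin r → A)
    (hy : ∀ j, f (y j) = 0) (i : ℕ) : (koszul y i).map f = 0 := by
  induction r generalizing i with
  | zero => exact Matrix.map_zero _ f.map_zero
  | succ r ih =>
    have ih' := ih (Fin.init y) fun j => hy _
    cases i with
    | zero =>
      refine (fromCols_map (koszul (Fin.init y) 0)
        (y (Fin.last r) • (1 : Matrix (KoszulBasis r 0) (KoszulBasis r 0) A)) f).trans ?_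
      rw [ih', Matrix.map_smul' _ _ _ (map_mul f), hy, zero_smul]
      exact fromCols_zero
    | succ i =>
      refine (fromBlocks_map _ _ _ _ _).trans ?_
      rw [ih', ih', Matrix.map_smul' _ _ _ (map_mul f), map_mul, hy, mul_zero, zero_smul,
        Matrix.map_zero _ f.map_zero]
      exact fromBlocks_zero

def koszulResolution {r : ℕ} (y : Fin r → A) (hy : IsWeaklyRegularTuple y) :
    MatrixResolution A where
  ι := KoszulBasis r
  d := koszul y
  exact i := range_mulVecLin_eq_ker_iff.2 ⟨koszul_mul_koszul y i, exists_koszul_mulVec_eq hy i⟩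

end Koszul

theorem Ideal.span_range_mul {A ι : Type*} [CommSemiring A] (c : A) (f : ι → A) :
    Ideal.span (Set.range fun a => c * f a) = Ideal.span {c} * Ideal.span (Set.range f) := by
  rw [Ideal.span_mul_span', Set.singleton_mul, ← Set.range_comp]
  rfl

theorem MvPolynomial.span_X_mul_X_pow_eq_mul_span {R : Type*} [CommSemiring R] {m : ℕ}
    (p : Fin (m + 1)) (e : Fin (m + 1) → ℕ) :
    Ideal.span {f : MvPolynomial (Fin (m + 1)) R | ∃ i, i ≠ p ∧ f = X p * X i ^ e i} =
      Ideal.span {X p} * Ideal.span (Set.range fun j => X (p.succAbove j) ^ e (p.succAbove j)) := by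
  rw [← Ideal.span_range_mul]
  congr 1
  ext f
  constructor
  · rintro ⟨i, hi, rfl⟩
    obtain ⟨j, rfl⟩ := Fin.exists_succAbove_eq hi
    exact ⟨j, rfl⟩
  · rintro ⟨j, rfl⟩
    exact ⟨_, Fin.succAbove_ne p j, rfl⟩

namespace MinFreeRes

/-- The resolution of `S ⧸ I` obtained by putting the augmentation in front: its module in
homological degree `i + 1` is the `i`-th module of the resolution of `I`. -/
def toMatrixResolution (R : MinFreeRes σ k I) : MatrixResolution (MvPolynomial σ k) where
  ι
    | 0 => Unit
    | i + 1 => Fin (R.rank i)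
  fintype
    | 0 => inferInstanceAs (Fintype Unit)
    | i + 1 => inferInstanceAs (Fintype (Fin (R.rank i)))
  decidableEq
    | 0 => inferInstanceAs (DecidableEq Unit)
    | i + 1 => inferInstanceAs (DecidableEq (Fin (R.rank i)))
  d
    | 0 => Matrix.of fun _ s => R.aug s
    | i + 1 => R.mat i
  exact
    | 0 => R.exact_zero
    | i + 1 => R.exact_succ i

theorem map_toMatrixResolution_d (R : MinFreeRes σ k I)
    (hI : I ≤ RingHom.ker (constantCoeff : MvPolynomial σ k →+* k)) :
    ∀ i, (R.toMatrixResolution.d i).map constantCoeff = 0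
  | 0 => by
    ext _ s
    exact hI (R.span_aug.le (Ideal.subset_span ⟨s, rfl⟩))
  | i + 1 => by
    ext s t
    exact R.minimal i s t

theorem natCard_toMatrixResolution_ι (R : MinFreeRes σ k I) (i : ℕ) :
    Nat.card (R.toMatrixResolution.ι (i + 1)) = R.rank i :=
  Nat.card_fin _

end MinFreeRes

theorem stmt9_general (k : Type) [Field k] (n : ℕ) (w : Fin n → ℕ)
    (x₁ : Fin n)
    (hw : ∀ i : Fin n, i ≠ x₁ → 2 ≤ w i)
    (I : Ideal (MvPolynomial (Fin n) k))
    (hI : I = Ideal.span {f | ∃ i : Fin n, i ≠ x₁ ∧ f = X x₁ * X i ^ w i})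
    (R : MinFreeRes (Fin n) k I) :
    R.pd = n - 2 := by
  obtain ⟨m, rfl⟩ : ∃ m, n = m + 1 := Nat.exists_eq_add_one_of_ne_zero x₁.pos.ne'
  set y : Fin m → MvPolynomial (Fin (m + 1)) k := fun j => X (x₁.succAbove j) ^ w (x₁.succAbove j)
  have hIy : I = Ideal.span {X x₁} * Ideal.span (Set.range y) :=
    hI.trans (span_X_mul_X_pow_eq_mul_span x₁ w)
  let P := R.toMatrixResolution
  let K := (koszulResolution y (isWeaklyRegularTuple_X_pow x₁.succAbove_right_injective w))
    |>.smulHead (X x₁) (mem_nonZeroDivisors_of_ne_zero (X_ne_zero _))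
  have hK : Ideal.span (Set.range (K.d 0 ())) = I := by
    rw [hIy, ← span_range_koszul_zero y, ← Ideal.span_range_mul]
    rfl
  have hminK : ∀ i, (K.d i).map constantCoeff = 0 :=
    MatrixResolution.map_smulHead_d _ _ (koszul_map_eq_zero _ y fun j => by
      rw [map_pow, constantCoeff_X, zero_pow (by have := hw _ (Fin.succAbove_ne x₁ j); omega)])
  have hminP : ∀ i, (P.d i).map constantCoeff = 0 := R.map_toMatrixResolution_d
    (hIy ▸ Ideal.mul_le_left.trans (Ideal.span_le.2 (Set.singleton_subset_iff.2 (by simp))))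
  have hα : ∃ α₁ : Matrix (P.ι 1) (K.ι 1) _, P.d 0 * α₁ = K.d 0 :=
    Matrix.exists_mul_eq_of_span_le (hK.trans R.span_aug.symm).le
  have hβ : ∃ β₁ : Matrix (K.ι 1) (P.ι 1) _, K.d 0 * β₁ = P.d 0 :=
    Matrix.exists_mul_eq_of_span_le (R.span_aug.trans hK.symm).le
  have hcard := MatrixResolution.natCard_ι_eq_of_minimal constantCoeff hminP hminK
    (α₀ := (1 : Matrix Unit Unit _)) (β₀ := (1 : Matrix Unit Unit _)) (Matrix.one_mul 1)
    (Matrix.one_mul 1) (hα.imp fun _ h => h.trans (Matrix.one_mul _).symm)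
    (hβ.imp fun _ h => h.trans (Matrix.one_mul _).symm)
  have hrank : ∀ i, R.rank i ≠ 0 ↔ i < m := fun i => by
    rw [← R.natCard_toMatrixResolution_ι, hcard,
      show Nat.card (K.ι (i + 1)) = m.choose (i + 1) from KoszulBasis.natCard m (i + 1), Ne,
      Nat.choose_eq_zero_iff, not_lt, Nat.add_one_le_iff]
  rw [MinFreeRes.pd, show {i | R.rank i ≠ 0} = Set.Iio m from Set.ext hrank, Nat.sSup_Iio]
  rfl

/-- Theorem 3.1, case (1): the edge ideal
`I = (x₁x₂^{w₂}, …, x₁x_n^{w_n})` of a weighted oriented star with all edges directed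
away from the center `x₁` and weights `w_i ≥ 2` has projective dimension `n - 2`.
(Vertices `x₁, …, x_n` are indexed by `0, …, n-1 : Fin n`, the center being `0`.) -/
theorem stmt9 (k : Type) [Field k] (n : ℕ) (hn : 2 ≤ n) (w : Fin n → ℕ)
    (x₁ : Fin n) (hx₁ : (x₁ : ℕ) = 0)
    (hw : ∀ i : Fin n, i ≠ x₁ → 2 ≤ w i)
    (I : Ideal (MvPolynomial (Fin n) k))
    (hI : I = Ideal.span {f | ∃ i : Fin n, i ≠ x₁ ∧ f = X x₁ * X i ^ w i})
    (R : MinFreeRes (Fin n) k I) :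
    R.pd = n - 2 :=
  stmt9_general k n w x₁ hw I hI R
end

section
/- Let D be a weighted rooted forest (a disjoint union of trees each with all edges oriented away from its root) on vertex set {x₁,…,x_n}, with weight function w satisfying w(x) ≥ 2 for every vertex x, and let I(D) = (x_i x_j^{w_j} : x_i→x_j ∈ E(D)) ⊆ S = k[x₁,…,x_n]. Then pd(I(D)) = |E(D)| − 1. -/
open MvPolynomial

variable {σ k : Type} [Field k] {I : Ideal (MvPolynomial σ k)}

/-!
For each edge `u → v` the variable `x_v` occurs in the generator `x_u x_v^(w v)` with exponent
`w v ≥ 2` and in every other generator with exponent at most `1`, so the generators form a dominant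
set: none divides the lcm of the others. Hence every entry of the differentials of the Taylor
resolution vanishes at the origin, i.e. the Taylor resolution is minimal, and its `i`-th module has
rank `(|E| choose (i + 1))`, which is nonzero exactly for `i ≤ |E| - 1`.

Exactness of the Taylor complex is checked one multidegree `μ` at a time, where it is the chain
complex of a full simplex and is contracted by coning off a vertex. Any two minimal resolutions of
the same ideal have the same ranks: the two comparison maps compose to maps homotopic to the
identity, hence equal to the identity modulo the maximal ideal.
-/

section Resolution

variable {S : Type*} [CommRing S]

theorem exists_seq_of_forall_exists_next {X : ℕ → Type*} (r : ∀ i, X i → X (i + 1) → Prop)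
    {x₀ : X 0} {x₁ : X 1} (h₀ : r 0 x₀ x₁) (next : ∀ i a b, r i a b → ∃ c, r (i + 1) b c) :
    ∃ x : ∀ i, X i, x 0 = x₀ ∧ ∀ i, r i (x i) (x (i + 1)) := by
  choose g hg using next
  let y : ∀ i, {p : X i × X (i + 1) // r i p.1 p.2} := fun i =>
    Nat.rec (motive := fun i => {p : X i × X (i + 1) // r i p.1 p.2}) ⟨(x₀, x₁), h₀⟩
      (fun i p => ⟨(p.1.2, g i _ _ p.2), hg i _ _ p.2⟩) i
  exact ⟨fun i => (y i).1.1, rfl, fun i => (y i).2⟩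

theorem Matrix.card_le_card_of_mul_eq_one {K : Type*} [CommRing K] [StrongRankCondition K]
    {m n : Type*} [Fintype m] [Fintype n] [DecidableEq m] {A : Matrix m n K} {B : Matrix n m K}
    (h : A * B = 1) : Fintype.card m ≤ Fintype.card n :=
  calc Fintype.card m = (A * B).rank := by rw [h, Matrix.rank_one]
    _ ≤ A.rank := Matrix.rank_mul_le_left A B
    _ ≤ Fintype.card n := A.rank_le_card_width

theorem Matrix.exists_mul_eq_of_range_eq_ker {l m n o : Type*} [Fintype m] [Fintype n]
    {A : Matrix l m S} {B : Matrix m n S}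
    (hAB : LinearMap.range B.mulVecLin = LinearMap.ker A.mulVecLin) {N : Matrix m o S}
    (hN : A * N = 0) : ∃ X : Matrix n o S, B * X = N := by
  have hcol : ∀ j, (fun i => N i j) ∈ LinearMap.range B.mulVecLin := fun j => by
    rw [hAB, LinearMap.mem_ker, Matrix.mulVecLin_apply]
    exact funext fun i => congrFun (congrFun hN i) j
  choose x hx using hcol
  exact ⟨Matrix.of fun i j => x j i, Matrix.ext fun i j => congrFun (hx j) i⟩

theorem Matrix.exists_mul_eq_of_mem_span {l n o : Type*} [Unique l] [Fintype n]
    {B : Matrix l n S} {N : Matrix l o S}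
    (hN : ∀ j, N default j ∈ Ideal.span (Set.range (B default))) :
    ∃ X : Matrix n o S, B * X = N := by
  choose x hx using fun j => Ideal.mem_span_range_iff_exists_fun.1 (hN j)
  refine ⟨Matrix.of fun i j => x j i, Matrix.ext fun a j => ?_⟩
  rw [Subsingleton.elim a default, Matrix.mul_apply, ← hx j]
  simp only [Matrix.of_apply, mul_comm]

/-- `d` resolves `S ⧸ I` by finite free modules: `d i` is the matrix of the differential
`S^(ι (i + 1)) → S^(ι i)` acting on column vectors, `S^(ι 0) = S`, the entries of the row `d 0`
generate `I`, and the complex is exact at every `S^(ι (i + 1))`. -/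
structure IsMatrixResolution {ι : ℕ → Type*} [∀ i, Fintype (ι i)] [Unique (ι 0)]
    (d : ∀ i, Matrix (ι i) (ι (i + 1)) S) (I : Ideal S) : Prop where
  span_range_zero : Ideal.span (Set.range (d 0 default)) = I
  exact : ∀ i, LinearMap.range (d (i + 1)).mulVecLin = LinearMap.ker (d i).mulVecLin

def IsChainMap {ι κ : ℕ → Type*} [∀ i, Fintype (ι i)] [∀ i, Fintype (κ i)]
    (dP : ∀ i, Matrix (ι i) (ι (i + 1)) S) (dQ : ∀ i, Matrix (κ i) (κ (i + 1)) S)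
    (f : ∀ i, Matrix (κ i) (ι i) S) : Prop :=
  ∀ i, dQ i * f (i + 1) = f i * dP i

variable {ι κ : ℕ → Type*} [∀ i, Fintype (ι i)] [∀ i, Fintype (κ i)]
  {dP : ∀ i, Matrix (ι i) (ι (i + 1)) S} {dQ : ∀ i, Matrix (κ i) (κ (i + 1)) S}

theorem IsChainMap.one_sub_mul [∀ i, DecidableEq (ι i)] {f : ∀ i, Matrix (κ i) (ι i) S}
    {g : ∀ i, Matrix (ι i) (κ i) S} (hf : IsChainMap dP dQ f) (hg : IsChainMap dQ dP g) :
    IsChainMap dP dP fun i => 1 - g i * f i := fun i => by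
  rw [Matrix.mul_sub, Matrix.sub_mul, Matrix.mul_one, Matrix.one_mul, ← Matrix.mul_assoc, hg i,
    Matrix.mul_assoc, hf i, Matrix.mul_assoc]

namespace IsMatrixResolution

variable [Unique (ι 0)] [Unique (κ 0)] {I : Ideal S}

theorem mul_eq_zero (hP : IsMatrixResolution dP I) (i : ℕ) : dP i * dP (i + 1) = 0 := by
  classical
  refine Matrix.toLin'.map_eq_zero_iff.1 ?_
  rw [Matrix.toLin'_apply', Matrix.mulVecLin_mul]
  exact LinearMap.range_le_ker_iff.1 (hP.exact i).le

theorem exists_isChainMap (hP : IsMatrixResolution dP I) (hQ : IsMatrixResolution dQ I) :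
    ∃ f : ∀ i, Matrix (κ i) (ι i) S, f 0 = Matrix.of (fun _ _ => 1) ∧ IsChainMap dP dQ f := by
  obtain ⟨f₁, hf₁⟩ : ∃ f₁ : Matrix (κ 1) (ι 1) S, dQ 0 * f₁ =
      (Matrix.of fun (_ : κ 0) (_ : ι 0) => (1 : S)) * dP 0 := by
    refine Matrix.exists_mul_eq_of_mem_span fun j => ?_
    rw [hQ.span_range_zero, ← hP.span_range_zero]
    have hrow : ((Matrix.of fun (_ : κ 0) (_ : ι 0) => (1 : S)) * dP 0) default j =
        dP 0 default j := by
      simp [Matrix.mul_apply]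
    exact hrow ▸ Ideal.subset_span (Set.mem_range_self j)
  refine exists_seq_of_forall_exists_next (fun i a b => dQ i * b = a * dP i) hf₁
    fun i a b hab => Matrix.exists_mul_eq_of_range_eq_ker (hQ.exact i) ?_
  rw [← Matrix.mul_assoc, hab, Matrix.mul_assoc, hP.mul_eq_zero, Matrix.mul_zero]

theorem exists_homotopy (hP : IsMatrixResolution dP I) {θ : ∀ i, Matrix (ι i) (ι i) S}
    (hθ : IsChainMap dP dP θ) (hθ₀ : θ 0 = 0) :
    ∃ h : ∀ i, Matrix (ι (i + 1)) (ι i) S,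
      h 0 = 0 ∧ ∀ i, θ (i + 1) = dP (i + 1) * h (i + 1) + h i * dP i := by
  obtain ⟨h₁, hh₁⟩ := Matrix.exists_mul_eq_of_range_eq_ker (hP.exact 0) (N := θ 1)
    (by rw [hθ 0, hθ₀, Matrix.zero_mul])
  refine exists_seq_of_forall_exists_next (X := fun i => Matrix (ι (i + 1)) (ι i) S)
    (fun i a b => θ (i + 1) = dP (i + 1) * b + a * dP i) (x₀ := 0)
    (by rw [hh₁, Matrix.zero_mul, add_zero]) fun i a b hab => ?_
  obtain ⟨c, hc⟩ := Matrix.exists_mul_eq_of_range_eq_ker (hP.exact (i + 1))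
    (N := θ (i + 2) - b * dP (i + 1)) <| by
      rw [Matrix.mul_sub, hθ (i + 1), ← Matrix.mul_assoc, ← Matrix.sub_mul, hab,
        add_sub_cancel_left, Matrix.mul_assoc, hP.mul_eq_zero, Matrix.mul_zero]
  exact ⟨c, by rw [hc, sub_add_cancel]⟩

variable {K : Type*} [CommRing K] [StrongRankCondition K]

theorem card_le [∀ i, DecidableEq (ι i)] (hP : IsMatrixResolution dP I)
    (hQ : IsMatrixResolution dQ I) (φ : S →+* K) (hmin : ∀ i, (dP (i + 1)).map φ = 0) (i : ℕ) :
    Fintype.card (ι i) ≤ Fintype.card (κ i) := by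
  obtain ⟨f, hf₀, hf⟩ := hP.exists_isChainMap hQ
  obtain ⟨g, hg₀, hg⟩ := hQ.exists_isChainMap hP
  obtain ⟨h, hh₀, hh⟩ := hP.exists_homotopy (hf.one_sub_mul hg) <| by
    ext a b
    simp [hf₀, hg₀, Matrix.mul_apply, Subsingleton.elim a b]
  cases i with
  | zero => simp
  | succ i =>
    refine Matrix.card_le_card_of_mul_eq_one (A := (g (i + 1)).map φ) (B := (f (i + 1)).map φ) ?_
    have hθ : φ.mapMatrix (1 - g (i + 1) * f (i + 1)) = 0 := by
      rw [RingHom.mapMatrix_apply, hh i, Matrix.map_add _ (map_add φ), Matrix.map_mul,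
        Matrix.map_mul, hmin, Matrix.zero_mul, zero_add]
      cases i with
      | zero => rw [hh₀, Matrix.map_zero _ (map_zero φ), Matrix.zero_mul]
      | succ i => rw [hmin, Matrix.mul_zero]
    rw [map_sub, map_one, sub_eq_zero, RingHom.mapMatrix_apply, Matrix.map_mul] at hθ
    exact hθ.symm

theorem card_eq [∀ i, DecidableEq (ι i)] [∀ i, DecidableEq (κ i)] (hP : IsMatrixResolution dP I)
    (hQ : IsMatrixResolution dQ I) (φ : S →+* K)
    (hminP : ∀ i, (dP (i + 1)).map φ = 0) (hminQ : ∀ i, (dQ (i + 1)).map φ = 0) (i : ℕ) :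
    Fintype.card (ι i) = Fintype.card (κ i) :=
  (hP.card_le hQ φ hminP i).antisymm (hQ.card_le hP φ hminQ i)

end IsMatrixResolution

end Resolution

noncomputable section Taylor

open Finset
open scoped Matrix

variable {α σ R : Type*} (m : α → σ →₀ ℕ) (E : Finset α)

abbrev TaylorIndex (E : Finset α) (c : ℕ) : Type _ := {A : Finset α // A ⊆ E ∧ A.card = c}

instance (c : ℕ) : Fintype (TaylorIndex E c) :=
  Fintype.subtype (E.powersetCard c) fun _ => mem_powersetCard

instance : Unique (TaylorIndex E 0) where
  default := ⟨∅, empty_subset E, card_empty⟩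
  uniq A := Subtype.ext (card_eq_zero.1 A.2.2)

theorem card_taylorIndex (c : ℕ) : Fintype.card (TaylorIndex E c) = E.card.choose c := by
  rw [Fintype.card_of_subtype (E.powersetCard c) fun _ => mem_powersetCard, card_powersetCard]

def lcmExp (A : Finset α) : σ →₀ ℕ := A.sup m

theorem lcmExp_mono {A B : Finset α} (h : A ⊆ B) : lcmExp m A ≤ lcmExp m B := sup_mono h

theorem le_lcmExp {A : Finset α} {e : α} (h : e ∈ A) : m e ≤ lcmExp m A := le_sup h

variable [LinearOrder α] [CommRing R]

def taylorSign (B : Finset α) (e : α) : R := (-1) ^ (B.filter (· < e)).card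

theorem taylorSign_eq_one {B : Finset α} {e : α} (h : ∀ f ∈ B, e ≤ f) :
    (taylorSign B e : R) = 1 := by
  rw [taylorSign, filter_false_of_mem fun f hf => not_lt.2 (h f hf), card_empty, pow_zero]

theorem taylorSign_insert_of_lt {B : Finset α} {e f : α} (hef : e < f) (he : e ∉ B) :
    (taylorSign (insert e B) f : R) = -taylorSign B f := by
  rw [taylorSign, filter_insert, if_pos hef, card_insert_of_notMem fun h => he (mem_filter.1 h).1,
    pow_succ, mul_neg_one, taylorSign]

theorem taylorSign_erase_of_not_lt {B : Finset α} {e f : α} (hfe : ¬f < e) :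
    (taylorSign (B.erase f) e : R) = taylorSign B e := by
  rw [taylorSign, taylorSign, filter_erase, erase_eq_of_notMem (by simp [hfe])]

theorem taylorSign_erase_of_lt {B : Finset α} {e f : α} (hef : e < f) (he : e ∈ B) :
    (taylorSign (B.erase e) f : R) = -taylorSign B f := by
  conv_rhs => rw [← insert_erase he]
  rw [taylorSign_insert_of_lt hef (notMem_erase e B), neg_neg]

theorem taylorSign_mul_add_mul_eq_zero {B : Finset α} {e f : α} (hef : e ≠ f) (he : e ∈ B)
    (hf : f ∈ B) :
    (taylorSign B f * taylorSign (B.erase f) e + taylorSign B e * taylorSign (B.erase e) f : R)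
      = 0 := by
  rcases hef.lt_or_gt with h | h
  · rw [taylorSign_erase_of_not_lt h.not_gt, taylorSign_erase_of_lt h he]; ring
  · rw [taylorSign_erase_of_not_lt h.not_gt, taylorSign_erase_of_lt h hf]; ring

def taylorDiff (c : ℕ) : Matrix (TaylorIndex E c) (TaylorIndex E (c + 1)) (MvPolynomial σ R) :=
  Matrix.of fun A B => ∑ e ∈ B.1,
    if A.1 = B.1.erase e then monomial (lcmExp m B.1 - lcmExp m A.1) (taylorSign B.1 e) else 0

/-- The basis vector `e_B` in multidegree `μ`, i.e. `x^(μ - lcmExp B) e_B`; it vanishes unless `B`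
is a `c`-subset of `E`. -/
def taylorVec (c : ℕ) (B : Finset α) (μ : σ →₀ ℕ) : TaylorIndex E c → MvPolynomial σ R :=
  fun A => if A.1 = B then monomial (μ - lcmExp m B) 1 else 0

variable {m E}

theorem taylorVec_eq_single {c : ℕ} {B : Finset α} (hB : B ⊆ E) (hc : B.card = c)
    (μ : σ →₀ ℕ) :
    taylorVec m E c B μ =
      Pi.single (⟨B, hB, hc⟩ : TaylorIndex E c) (monomial (μ - lcmExp m B) (1 : R)) := by
  funext A
  simp only [taylorVec, Pi.single_apply, Subtype.ext_iff]

theorem taylorDiff_mulVec_taylorVec {c : ℕ} {B : Finset α} (hB : B ⊆ E) (hc : B.card = c + 1)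
    {μ : σ →₀ ℕ} (hμ : lcmExp m B ≤ μ) :
    taylorDiff m E c *ᵥ taylorVec (R := R) m E (c + 1) B μ =
      ∑ e ∈ B, (taylorSign B e : R) • taylorVec m E c (B.erase e) μ := by
  funext A
  rw [taylorVec_eq_single hB hc, Matrix.mulVec_single, Finset.sum_apply]
  simp only [Pi.smul_apply, Matrix.col_apply, op_smul_eq_mul, taylorDiff, Matrix.of_apply,
    Finset.sum_mul, taylorVec]
  refine Finset.sum_congr rfl fun e _ => ?_
  split_ifs with h
  · rw [monomial_mul, smul_monomial, smul_eq_mul, mul_one, h, add_comm,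
      tsub_add_tsub_cancel hμ (lcmExp_mono m (erase_subset e B))]
  · rw [zero_mul, smul_zero]

theorem taylorDiff_mul_taylorDiff (c : ℕ) :
    taylorDiff (R := R) m E c * taylorDiff (R := R) m E (c + 1) = 0 := by
  refine Matrix.ext fun A C => ?_
  obtain ⟨C, hCE, hC⟩ := C
  have hsub : ∀ f ∈ C, C.erase f ⊆ E := fun f _ => (erase_subset f C).trans hCE
  have hcard : ∀ f ∈ C, (C.erase f).card = c + 1 := fun f hf => by
    rw [card_erase_of_mem hf, hC]; rfl
  have hcol : Pi.single (⟨C, hCE, hC⟩ : TaylorIndex E (c + 2)) 1 =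
      taylorVec (R := R) m E (c + 2) C (lcmExp m C) := by
    rw [taylorVec_eq_single hCE hC, tsub_self, ← one_def]
  suffices h : taylorDiff m E c *ᵥ
      (taylorDiff m E (c + 1) *ᵥ Pi.single (⟨C, hCE, hC⟩ : TaylorIndex E (c + 2)) 1) = 0 by
    have hA := congrFun h A
    rwa [Matrix.mulVec_mulVec, Matrix.mulVec_single_one, Matrix.col_apply] at hA
  rw [hcol, taylorDiff_mulVec_taylorVec hCE hC le_rfl, Matrix.mulVec_sum,
    sum_congr rfl fun f hf => by
      rw [Matrix.mulVec_smul, taylorDiff_mulVec_taylorVec (hsub f hf) (hcard f hf)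
        (lcmExp_mono m (erase_subset f C)), smul_sum]]
  simp_rw [smul_smul]
  rw [← sum_finset_product' C.offDiag C (fun f => C.erase f) fun p => by
    rw [mem_offDiag, mem_erase, ne_comm]; tauto]
  refine sum_involution (fun p _ => p.swap) (fun p hp => ?_) (fun p hp _ => ?_)
    (fun p hp => by rw [mem_offDiag] at hp ⊢; exact ⟨hp.2.1, hp.1, Ne.symm hp.2.2⟩) fun _ _ => rfl
  · obtain ⟨hf, he, hfe⟩ := mem_offDiag.1 hp
    rw [Prod.fst_swap, Prod.snd_swap, erase_right_comm (a := p.2), ← add_smul,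
      taylorSign_mul_add_mul_eq_zero (Ne.symm hfe) he hf, zero_smul]
  · exact fun h => (mem_offDiag.1 hp).2.2 (congrArg Prod.snd h)

variable (m E) in
/-- The Taylor complex in multidegree `μ` is the simplicial chain complex of the full simplex on the
generators dividing `x^μ`; `coneVec` is its contracting homotopy, coning off the least of them. -/
def coneVec (c : ℕ) (A : Finset α) (μ : σ →₀ ℕ) : TaylorIndex E (c + 1) → MvPolynomial σ R :=
  if h : (E.filter fun e => m e ≤ μ).Nonempty then
    if (E.filter fun e => m e ≤ μ).min' h ∈ A then 0
    else taylorVec m E (c + 1) (insert ((E.filter fun e => m e ≤ μ).min' h) A) μ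
  else 0

theorem coneVec_eq {c : ℕ} {A : Finset α} {μ : σ →₀ ℕ} {e₀ : α}
    (he₀ : IsLeast (↑(E.filter fun e => m e ≤ μ) : Set α) e₀) :
    coneVec (R := R) m E c A μ = if e₀ ∈ A then 0 else taylorVec m E (c + 1) (insert e₀ A) μ := by
  have hne : (E.filter fun e => m e ≤ μ).Nonempty := ⟨e₀, he₀.1⟩
  rw [coneVec, dif_pos hne, (isLeast_min' _ hne).unique he₀]

variable (m E) in
def taylorHomotopy (c : ℕ) :
    (TaylorIndex E c → MvPolynomial σ R) →ₗ[R] (TaylorIndex E (c + 1) → MvPolynomial σ R) :=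
  (Pi.basis fun _ => basisMonomials σ R).constr R
    fun Ad => coneVec m E c Ad.1.1 (Ad.2 + lcmExp m Ad.1.1)

theorem taylorHomotopy_taylorVec {c : ℕ} {A : Finset α} (hA : A ⊆ E) (hc : A.card = c)
    {μ : σ →₀ ℕ} (hμ : lcmExp m A ≤ μ) :
    taylorHomotopy m E c (taylorVec (R := R) m E c A μ) = coneVec m E c A μ := by
  have hbasis : taylorVec (R := R) m E c A μ =
      Pi.basis (fun _ => basisMonomials σ R) ⟨⟨A, hA, hc⟩, μ - lcmExp m A⟩ := by
    rw [Pi.basis_apply, coe_basisMonomials, taylorVec_eq_single hA hc]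
  rw [hbasis, taylorHomotopy, Module.Basis.constr_basis, tsub_add_cancel_of_le hμ]

theorem taylorHomotopy_spec_taylorVec {c : ℕ} {A : Finset α} (hA : A ⊆ E) (hc : A.card = c + 1)
    {μ : σ →₀ ℕ} (hμ : lcmExp m A ≤ μ) :
    taylorDiff m E (c + 1) *ᵥ taylorHomotopy m E (c + 1) (taylorVec (R := R) m E (c + 1) A μ) +
      taylorHomotopy m E c (taylorDiff m E c *ᵥ taylorVec m E (c + 1) A μ) =
      taylorVec m E (c + 1) A μ := by
  obtain ⟨a, ha⟩ := card_pos.1 (by rw [hc]; exact c.succ_pos)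
  have hne : (E.filter fun e => m e ≤ μ).Nonempty :=
    ⟨a, mem_filter.2 ⟨hA ha, (le_lcmExp m ha).trans hμ⟩⟩
  obtain ⟨e₀, he₀⟩ : ∃ e₀, IsLeast (↑(E.filter fun e => m e ≤ μ) : Set α) e₀ :=
    ⟨_, isLeast_min' _ hne⟩
  have hle : ∀ f ∈ A, e₀ ≤ f := fun f hf => he₀.2 (mem_filter.2 ⟨hA hf, (le_lcmExp m hf).trans hμ⟩)
  rw [taylorHomotopy_taylorVec hA hc hμ, coneVec_eq he₀, taylorDiff_mulVec_taylorVec hA hc hμ,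
    map_sum, sum_congr rfl fun e he => by
      rw [map_smul, taylorHomotopy_taylorVec ((erase_subset e A).trans hA)
        (by rw [card_erase_of_mem he, hc]; rfl) ((lcmExp_mono m (erase_subset e A)).trans hμ),
        coneVec_eq he₀]]
  by_cases h₀ : e₀ ∈ A
  · rw [if_pos h₀, Matrix.mulVec_zero, zero_add, sum_eq_single_of_mem e₀ h₀ fun f _ hfe => by
      rw [if_pos (mem_erase.2 ⟨Ne.symm hfe, h₀⟩), smul_zero], if_neg (notMem_erase e₀ A),
      insert_erase h₀, taylorSign_eq_one hle, one_smul]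
  · have hins : lcmExp m (insert e₀ A) ≤ μ := by
      rw [lcmExp, sup_insert]
      exact sup_le (mem_filter.1 he₀.1).2 hμ
    rw [if_neg h₀, taylorDiff_mulVec_taylorVec (insert_subset (mem_filter.1 he₀.1).1 hA)
      (by rw [card_insert_of_notMem h₀, hc]) hins, sum_insert h₀, erase_insert h₀,
      taylorSign_eq_one (forall_mem_insert _ _ _ |>.2 ⟨le_rfl, hle⟩), one_smul, add_assoc,
      add_eq_left, ← sum_add_distrib]
    refine sum_eq_zero fun f hf => ?_
    have hlt : e₀ < f := (hle f hf).lt_of_ne (ne_of_mem_of_not_mem hf h₀).symm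
    rw [if_neg fun h => h₀ (mem_of_mem_erase h), erase_insert_of_ne hlt.ne,
      taylorSign_insert_of_lt hlt h₀, neg_smul, neg_add_cancel]

theorem taylorHomotopy_spec (c : ℕ) (v : TaylorIndex E (c + 1) → MvPolynomial σ R) :
    taylorDiff m E (c + 1) *ᵥ taylorHomotopy m E (c + 1) v +
      taylorHomotopy m E c (taylorDiff m E c *ᵥ v) = v := by
  let b := Pi.basis fun _ : TaylorIndex E (c + 1) => basisMonomials σ R
  have h : (taylorDiff m E (c + 1)).mulVecLin.restrictScalars R ∘ₗ taylorHomotopy m E (c + 1) +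
      taylorHomotopy m E c ∘ₗ (taylorDiff m E c).mulVecLin.restrictScalars R = LinearMap.id :=
    b.ext fun ⟨A, d⟩ => by
      have h := taylorHomotopy_spec_taylorVec (R := R) A.2.1 A.2.2 (μ := d + lcmExp m A.1)
        le_add_self
      rw [taylorVec_eq_single A.2.1 A.2.2, add_tsub_cancel_right] at h
      simpa [b, Pi.basis_apply, coe_basisMonomials] using h
  exact LinearMap.congr_fun h v

theorem range_taylorDiff_eq_ker (c : ℕ) :
    LinearMap.range (taylorDiff (R := R) m E (c + 1)).mulVecLin =
      LinearMap.ker (taylorDiff m E c).mulVecLin := by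
  refine le_antisymm (LinearMap.range_le_ker_iff.2 ?_) fun v hv =>
    ⟨taylorHomotopy m E (c + 1) v, ?_⟩
  · rw [← Matrix.mulVecLin_mul, taylorDiff_mul_taylorDiff, Matrix.mulVecLin_zero]
  · have h := taylorHomotopy_spec (m := m) c v
    rw [LinearMap.mem_ker, Matrix.mulVecLin_apply] at hv
    rwa [hv, map_zero, add_zero] at h

theorem taylorDiff_zero_apply {e : α} (B : TaylorIndex E 1) (hB : B.1 = {e}) :
    taylorDiff (R := R) m E 0 default B = monomial (m e) 1 := by
  have h₀ : ((default : TaylorIndex E 0) : Finset α) = ∅ := rfl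
  rw [taylorDiff, Matrix.of_apply, hB, sum_singleton, erase_singleton, if_pos h₀, h₀, lcmExp,
    lcmExp, sup_singleton, sup_empty, bot_eq_zero, tsub_zero, taylorSign_eq_one (by simp)]

theorem range_taylorDiff_zero :
    Set.range (taylorDiff (R := R) m E 0 default) = (fun e => monomial (m e) 1) '' E := by
  ext f
  constructor
  · rintro ⟨B, rfl⟩
    obtain ⟨e, he⟩ := card_eq_one.1 B.2.2
    exact ⟨e, B.2.1 (he ▸ mem_singleton_self e), (taylorDiff_zero_apply B he).symm⟩
  · rintro ⟨e, he, rfl⟩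
    exact ⟨⟨{e}, singleton_subset_iff.2 he, card_singleton e⟩, taylorDiff_zero_apply _ rfl⟩

variable (m E) in
theorem isMatrixResolution_taylorDiff :
    IsMatrixResolution (taylorDiff (R := R) m E) (Ideal.span ((fun e => monomial (m e) 1) '' E)) :=
  ⟨by rw [range_taylorDiff_zero], range_taylorDiff_eq_ker⟩

def IsDominant (m : α → σ →₀ ℕ) (E : Finset α) : Prop :=
  ∀ e ∈ E, ∃ x, ∀ f ∈ E, f ≠ e → m f x < m e x

theorem IsDominant.not_le_lcmExp_erase (h : IsDominant m E) {B : Finset α} {e : α} (hB : B ⊆ E)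
    (he : e ∈ B) (hne : (B.erase e).Nonempty) : ¬m e ≤ lcmExp m (B.erase e) := by
  obtain ⟨x, hx⟩ := h e (hB he)
  have hlt : ∀ f ∈ B.erase e, m f x < m e x := fun f hf =>
    hx f (hB (mem_of_mem_erase hf)) (ne_of_mem_erase hf)
  obtain ⟨f, hf⟩ := hne
  have hsup : lcmExp m (B.erase e) x < m e x := by
    rw [lcmExp, apply_sup_eq_sup_comp (fun g : σ →₀ ℕ => g x) (fun _ _ => Finsupp.sup_apply _ _ _)
      rfl, Finset.sup_lt_iff ((Nat.zero_le _).trans_lt (hlt f hf))]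
    exact hlt
  exact fun hle => (hle x).not_gt hsup

theorem IsDominant.taylorDiff_map_constantCoeff (h : IsDominant m E) (c : ℕ) :
    (taylorDiff (R := R) m E (c + 1)).map constantCoeff = 0 := by
  classical
  refine Matrix.ext fun A B => ?_
  simp only [Matrix.map_apply, taylorDiff, Matrix.of_apply, map_sum, Matrix.zero_apply]
  refine sum_eq_zero fun e he => ?_
  split_ifs with hA
  · have hne : (B.1.erase e).Nonempty := by
      rw [← card_pos, card_erase_of_mem he, B.2.2]
      exact c.succ_pos
    rw [constantCoeff_monomial, if_neg fun h0 => h.not_le_lcmExp_erase B.2.1 he hne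
      ((le_lcmExp m he).trans (hA ▸ tsub_eq_zero_iff_le.1 h0))]
  · exact map_zero _

end Taylor

namespace MinFreeRes

variable (R : MinFreeRes σ k I)

/-- The modules of `R` reindexed so that the target `S` of the augmentation sits in degree `0`. -/
def basisIndex : ℕ → Type
  | 0 => Unit
  | i + 1 => Fin (R.rank i)

instance (i : ℕ) : Fintype (R.basisIndex i) :=
  match i with
  | 0 => inferInstanceAs (Fintype Unit)
  | i + 1 => inferInstanceAs (Fintype (Fin (R.rank i)))

instance (i : ℕ) : DecidableEq (R.basisIndex i) :=
  match i with
  | 0 => inferInstanceAs (DecidableEq Unit)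
  | i + 1 => inferInstanceAs (DecidableEq (Fin (R.rank i)))

instance : Unique (R.basisIndex 0) := inferInstanceAs (Unique Unit)

def differential : ∀ i, Matrix (R.basisIndex i) (R.basisIndex (i + 1)) (MvPolynomial σ k)
  | 0 => Matrix.of fun _ s => R.aug s
  | i + 1 => R.mat i

theorem isMatrixResolution : IsMatrixResolution R.differential I where
  span_range_zero := R.span_aug
  exact
    | 0 => R.exact_zero
    | i + 1 => R.exact_succ i

theorem differential_map_constantCoeff (i : ℕ) :
    (R.differential (i + 1)).map constantCoeff = 0 :=
  Matrix.ext fun s t => R.minimal i s t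

theorem rank_eq_choose_of_isDominant {α : Type*} [LinearOrder α] {m : α → σ →₀ ℕ}
    {E : Finset α} (hI : I = Ideal.span ((fun e => monomial (m e) 1) '' E)) (hE : IsDominant m E)
    (i : ℕ) : R.rank i = E.card.choose (i + 1) := by
  subst hI
  have h := R.isMatrixResolution.card_eq (isMatrixResolution_taylorDiff m E) constantCoeff
    R.differential_map_constantCoeff hE.taylorDiff_map_constantCoeff (i + 1)
  rwa [card_taylorIndex, show Fintype.card (R.basisIndex (i + 1)) = R.rank i from
    Fintype.card_fin _] at h

theorem pd_add_one_eq_card_of_isDominant {α : Type*} [LinearOrder α] {m : α → σ →₀ ℕ}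
    {E : Finset α} (hI : I = Ideal.span ((fun e => monomial (m e) 1) '' E)) (hE : IsDominant m E)
    (hne : E.Nonempty) : R.pd + 1 = E.card := by
  have hcard := hne.card_pos
  have hrank : {i | R.rank i ≠ 0} = Set.Iic (E.card - 1) := by
    ext i
    simp only [Set.mem_ofPred_eq, Set.mem_Iic, R.rank_eq_choose_of_isDominant hI hE,
      ne_eq, Nat.choose_eq_zero_iff, not_lt]
    omega
  rw [pd, hrank, csSup_Iic]
  omega

end MinFreeRes

section Forest

variable {σ : Type*}

/-- The exponent of the generator `x_u x_v^(w v)` of the edge `u → v`, where `u = p v` is the parent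
of `v`; at a root the value is a placeholder. -/
noncomputable def edgeExp (p : σ → Option σ) (w : σ → ℕ) (v : σ) : σ →₀ ℕ :=
  Finsupp.single ((p v).getD v) 1 + Finsupp.single v (w v)

theorem isDominant_edgeExp (p : σ → Option σ) {w : σ → ℕ} (hw : ∀ v, 2 ≤ w v) (E : Finset σ) :
    IsDominant (edgeExp p w) E := by
  classical
  refine fun e _ => ⟨e, fun f _ hfe => ?_⟩
  have hf : edgeExp p w f e ≤ 1 := by
    simp only [edgeExp, Finsupp.add_apply, Finsupp.single_apply, if_neg hfe, add_zero]
    split_ifs <;> omega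
  have he : w e ≤ edgeExp p w e e := by simp [edgeExp]
  have := hw e
  omega

theorem setOf_edgeGenerators_eq (k : Type*) [CommSemiring k] (p : σ → Option σ) (w : σ → ℕ)
    {E : Finset σ} (hE : ∀ v, v ∈ E ↔ (p v).isSome) :
    {f : MvPolynomial σ k | ∃ u v, p v = some u ∧ f = X u * X v ^ w v} =
      (fun v => monomial (edgeExp p w v) 1) '' E := by
  have hX : ∀ u v, (X u * X v ^ w v : MvPolynomial σ k) =
      monomial (Finsupp.single u 1 + Finsupp.single v (w v)) 1 := fun u v => by
    rw [X_pow_eq_monomial, X, monomial_mul, one_mul]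
  ext f
  constructor
  · rintro ⟨u, v, hv, rfl⟩
    exact ⟨v, (hE v).2 (by simp [hv]), by simp [edgeExp, hv, hX]⟩
  · rintro ⟨v, hv, rfl⟩
    obtain ⟨u, hu⟩ := Option.isSome_iff_exists.1 ((hE v).1 hv)
    exact ⟨u, v, hu, by simp [edgeExp, hu, hX]⟩

end Forest

theorem stmt13_general (k : Type) [Field k] (n : ℕ)
    (p : Fin n → Option (Fin n))
    (w : Fin n → ℕ) (hw : ∀ i, 2 ≤ w i)
    (E : Finset (Fin n)) (hE : E = Finset.univ.filter fun v => (p v).isSome)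
    (hEne : E.Nonempty)
    (I : Ideal (MvPolynomial (Fin n) k))
    (hI : I = Ideal.span {f | ∃ u v : Fin n, p v = some u ∧ f = X u * X v ^ w v})
    (R : MinFreeRes (Fin n) k I) :
    R.pd + 1 = E.card := by
  have hgen := setOf_edgeGenerators_eq k p w (E := E) fun v => by simp [hE]
  exact R.pd_add_one_eq_card_of_isDominant (by rw [hI, hgen]) (isDominant_edgeExp p hw E) hEne

/-- Theorem 3.3: the edge ideal `I(D) = (x_i x_j^{w_j} : x_i → x_j ∈ E(D))` of a
weighted rooted forest `D` (encoded by a parent function `p`, acyclic by virtue of a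
height function, with all edges oriented away from the roots) with all weights `≥ 2`
and at least one edge satisfies `pd(I(D)) = |E(D)| - 1`, i.e. `pd(I(D)) + 1 = |E(D)|`. -/
theorem stmt13 (k : Type) [Field k] (n : ℕ)
    (p : Fin n → Option (Fin n)) (ht : Fin n → ℕ)
    (hforest : ∀ u v : Fin n, p v = some u → ht u < ht v)
    (w : Fin n → ℕ) (hw : ∀ i, 2 ≤ w i)
    (E : Finset (Fin n)) (hE : E = Finset.univ.filter fun v => (p v).isSome)
    (hEne : E.Nonempty)
    (I : Ideal (MvPolynomial (Fin n) k))
    (hI : I = Ideal.span {f | ∃ u v : Fin n, p v = some u ∧ f = X u * X v ^ w v})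
    (R : MinFreeRes (Fin n) k I) :
    R.pd + 1 = E.card :=
  stmt13_general k n p w hw E hE hEne I hI R
end

section
/- Let n ≥ 3, let w₁,…,w_n ≥ 2 be integers, and let I = (x₁x₂^{w₂}, x₂x₃^{w₃}, …, x_{n−1}x_n^{w_n}, x_n x₁^{w₁}) in S = k[x₁,…,x_n]. Then depth(I) = 1 as a graded S-module. -/
open MvPolynomial

variable {σ k : Type} [Field k] {I : Ideal (MvPolynomial σ k)}

/-!
The monomial `v = ∏ xᵢ ^ (wᵢ - 1)` lies outside `I`, yet `xⱼ v ∈ I` for every `j`, since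
`x_{j-1} xⱼ ^ wⱼ` divides `xⱼ v` once `w_{j-1} ≥ 2`. So for any `a, b` in the maximal ideal,
`b (a v) = a (b v)` lies in `a I`; if `a, b` were regular on `I`, then `a v ∈ a I`, i.e. `v ∈ I`.
Hence no regular sequence on `I` has length two, while a single variable is regular on `I`
by Nakayama's lemma.
-/

open RingTheory.Sequence Pointwise

theorem RingTheory.Sequence.isRegular_singleton_of_not_isUnit {R M : Type*} [CommRing R]
    [IsDomain R] [AddCommGroup M] [Module R M] [Module.Finite R M] [Module.IsTorsionFree R M]
    [Nontrivial M] {x : R} (hx0 : x ≠ 0) (hx : ¬IsUnit x) : IsRegular M [x] := by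
  refine (isRegular_cons_iff M x []).mpr ⟨.of_ne_zero hx0, ?_⟩
  suffices x • (⊤ : Submodule R M) ≠ ⊤ from
    have := Submodule.Quotient.nontrivial_iff.mpr this
    IsRegular.nil R _
  intro htop
  obtain ⟨r, hr1, hr⟩ := Submodule.exists_sub_one_mem_and_smul_eq_zero_of_fg_of_le_smul
    (Ideal.span {x}) (⊤ : Submodule R M) Module.Finite.fg_top
    (by rw [Submodule.ideal_span_singleton_smul, htop])
  obtain ⟨m, hm⟩ := exists_ne (0 : M)
  have hr0 : r = 0 := (smul_eq_zero.mp (hr m trivial)).resolve_right hm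
  rw [hr0, zero_sub, Ideal.neg_mem_iff, Ideal.mem_span_singleton] at hr1
  exact hx (isUnit_of_dvd_one hr1)

theorem RingTheory.Sequence.not_isWeaklyRegular_cons_cons_of_mul_mem {R : Type*} [CommRing R]
    [IsDomain R] {I : Ideal R} [Nontrivial I] {v a b : R} (hv : v ∉ I) (ha : a * v ∈ I)
    (hb : b * v ∈ I) (rs : List R) : ¬IsWeaklyRegular I (a :: b :: rs) := by
  simp only [isWeaklyRegular_cons_iff]
  rintro ⟨ha_reg, hb_reg, -⟩
  have ha0 : a ≠ 0 := by
    rintro rfl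
    exact not_subsingleton I ha_reg.subsingleton
  have hav : (⟨a * v, ha⟩ : I) ∈ a • (⊤ : Submodule R I) := by
    rw [← Submodule.Quotient.mk_eq_zero]
    refine hb_reg (show b • _ = b • 0 from ?_)
    rw [smul_zero, ← Submodule.Quotient.mk_smul, Submodule.Quotient.mk_eq_zero]
    convert Submodule.smul_mem_pointwise_smul (⟨b * v, hb⟩ : I) a ⊤ trivial using 1
    ext1
    exact mul_left_comm b a v
  obtain ⟨y, -, hy⟩ := Submodule.mem_smul_pointwise_iff_exists _ _ _ |>.mp hav
  have hyv : (y : R) = v := mul_left_cancel₀ ha0 (congrArg Subtype.val hy)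
  exact hv (hyv ▸ y.2)

theorem mdepth_eq_one_of_mul_mem {σ k : Type} [Field k] [Finite σ] [Nonempty σ]
    {I : Ideal (MvPolynomial σ k)} (hI : I ≠ ⊥) {v : MvPolynomial σ k} (hv : v ∉ I)
    (hmul : ∀ p, constantCoeff p = 0 → p * v ∈ I) : mdepth σ k I = 1 := by
  have : Nontrivial I := Submodule.nontrivial_iff_ne_bot.mpr hI
  refine IsGreatest.csSup_eq ⟨?_, ?_⟩
  · obtain ⟨i⟩ := ‹Nonempty σ›
    refine ⟨[X i], rfl, by simp, isRegular_singleton_of_not_isUnit (X_ne_zero i) fun hu => ?_⟩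
    simpa using hu.map constantCoeff
  · rintro _ ⟨rs, rfl, hc, hreg⟩
    match rs, hc, hreg with
    | [], _, _ | [_], _, _ => simp
    | a :: b :: rs, hc, hreg =>
      exact absurd hreg.toIsWeaklyRegular <| not_isWeaklyRegular_cons_cons_of_mul_mem hv
        (hmul a (hc a (by simp))) (hmul b (hc b (by simp))) rs

namespace MvPolynomial

variable {σ R : Type*} [CommSemiring R]

theorem monomial_one_mem_span_monomial_image_iff [Nontrivial R] {S : Set (σ →₀ ℕ)}
    {d : σ →₀ ℕ} :
    monomial d (1 : R) ∈ Ideal.span ((fun s => monomial s (1 : R)) '' S) ↔ ∃ e ∈ S, e ≤ d := by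
  classical
  simp [mem_ideal_span_monomial_image, support_monomial]

theorem mul_monomial_mem_span_monomial_image {S : Set (σ →₀ ℕ)} {d : σ →₀ ℕ}
    (hS : ∀ j, ∃ e ∈ S, e ≤ Finsupp.single j 1 + d) {p : MvPolynomial σ R}
    (hp : constantCoeff p = 0) :
    p * monomial d 1 ∈ Ideal.span ((fun s => monomial s (1 : R)) '' S) := by
  classical
  refine mem_ideal_span_monomial_image.mpr fun m hm => ?_
  rw [mem_support_iff, coeff_mul_monomial', mul_one, ite_ne_right_iff] at hm
  obtain ⟨hdm, hm⟩ := hm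
  have hmd : m - d ≠ 0 := by
    rintro h
    rw [h, ← constantCoeff_eq] at hm
    exact hm hp
  obtain ⟨j, hj⟩ := Finsupp.ne_iff.mp hmd
  obtain ⟨e, he, hle⟩ := hS j
  refine ⟨e, he, hle.trans ((le_tsub_iff_right hdm).mp ?_)⟩
  exact Finsupp.single_le_iff.mpr (Nat.one_le_iff_ne_zero.mpr hj)

end MvPolynomial

namespace WeightedCycle

variable {n : ℕ} (w : Fin n → ℕ)

noncomputable def edgeExp (i : Fin n) : Fin n →₀ ℕ :=
  Finsupp.single i 1 + Finsupp.single (finRotate n i) (w (finRotate n i))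

noncomputable def socleExp : Fin n →₀ ℕ :=
  Finsupp.equivFunOnFinite.symm fun i => w i - 1

theorem X_mul_X_pow_eq_monomial_edgeExp {k : Type*} [CommSemiring k] (i : Fin n) :
    (X i * X (finRotate n i) ^ w (finRotate n i) : MvPolynomial (Fin n) k) =
      monomial (edgeExp w i) 1 := by
  rw [X_pow_eq_monomial, X, monomial_mul, one_mul, edgeExp]

variable {w}

theorem edgeExp_not_le_socleExp (hw : ∀ i, 1 ≤ w i) (i : Fin n) : ¬edgeExp w i ≤ socleExp w := by
  intro h
  have hle := h (finRotate n i)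
  have := hw (finRotate n i)
  simp only [edgeExp, socleExp, Finsupp.add_apply, Finsupp.single_eq_same,
    Finsupp.coe_equivFunOnFinite_symm] at hle
  omega

theorem edgeExp_le_single_add_socleExp (hn : 2 ≤ n) (hw : ∀ i, 2 ≤ w i) (i : Fin n) :
    edgeExp w i ≤ Finsupp.single (finRotate n i) 1 + socleExp w := by
  have hne : finRotate n i ≠ i :=
    Equiv.Perm.mem_support.mp (support_finRotate_of_le hn ▸ Finset.mem_univ i)
  intro l
  simp only [edgeExp, socleExp, Finsupp.add_apply, Finsupp.single_apply,
    Finsupp.coe_equivFunOnFinite_symm]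
  have hwl := hw l
  split_ifs <;> subst_vars <;> omega

end WeightedCycle

open WeightedCycle in
/-- Corollary 4.2: the edge ideal of a weighted oriented `n`-cycle (`n ≥ 3`) with all
weights `≥ 2` has `depth(I) = 1` as a graded module over the polynomial ring.
(Vertices are indexed cyclically by `Fin n`; `finRotate n` is the successor `i ↦ i + 1 (mod n)`.) -/
theorem stmt18 (k : Type) [Field k] (n : ℕ) (hn : 3 ≤ n) (w : Fin n → ℕ)
    (hw : ∀ i, 2 ≤ w i)
    (I : Ideal (MvPolynomial (Fin n) k))
    (hI : I = Ideal.span {f | ∃ i : Fin n, f = X i * X (finRotate n i) ^ w (finRotate n i)}) :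
    mdepth (Fin n) k I = 1 := by
  have hgen : {f | ∃ i : Fin n, f = X i * X (finRotate n i) ^ w (finRotate n i)} =
      (fun s => monomial s (1 : k)) '' Set.range (edgeExp w) := by
    ext f
    simp [X_mul_X_pow_eq_monomial_edgeExp, eq_comm, -finRotate_apply]
  subst hI
  rw [hgen]
  let i₀ : Fin n := ⟨0, by omega⟩
  have : Nonempty (Fin n) := ⟨i₀⟩
  refine mdepth_eq_one_of_mul_mem (v := monomial (socleExp w) 1) ?_ ?_ fun p hp => ?_
  · refine (Submodule.ne_bot_iff _).mpr ⟨_, Ideal.subset_span ⟨_, Set.mem_range_self i₀, rfl⟩, ?_⟩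
    exact monomial_eq_zero.not.mpr one_ne_zero
  · rw [monomial_one_mem_span_monomial_image_iff]
    rintro ⟨_, ⟨i, rfl⟩, hle⟩
    exact edgeExp_not_le_socleExp (fun i => (hw i).trans' one_le_two) i hle
  · exact mul_monomial_mem_span_monomial_image
      ((finRotate n).surjective.forall.mpr fun i =>
        ⟨_, Set.mem_range_self i, edgeExp_le_single_add_socleExp (by omega) hw i⟩) hp
end
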